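/- Let J : ℕ × ℕ × {0,1} → ℝ be a nonnegative function belonging to the class ℱ, and let T be the intermediate-value function obtained from J. Then T also belongs to the class ℱ, i.e., T satisfies all nine properties (F1)–(F9). -/

import Mathlib

/-!
`T` differs from `J` only in the `l₂ = 0` layer, where `T(x,q₁,0)` is the minimum of
`J(x,q₁,0)` and the `l₂ = 1` value at the predecessor of `(x,q₁)`. Every inequality of
(F1)–(F9) with a `T(·,·,0)` on its larger side thus splits into two inequalities about `J`:
one is the same property of `J`, the other needs only (F4), (F7)–(F9) and three consequences
for the `l₂ = 1` layer: discrete convexity in `x`, convexity in `q₁` along `x = 0`, and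
supermodularity.
-/

/-- The class ℱ of functions `f : ℕ × ℕ × {0,1} → ℝ` (with `l₂ : Fin 2`)
satisfying the nine properties (F1)–(F9) together with nonnegativity. -/
structure InClassF (f : ℕ → ℕ → Fin 2 → ℝ) : Prop where
  nonneg : ∀ x q₁ l₂, 0 ≤ f x q₁ l₂
  F1 : ∀ x q₁, f (x+1) q₁ 0 + f (x+1) q₁ 1 ≤ f x q₁ 1 + f (x+2) q₁ 0
  F2 : ∀ x q₁, f (x+1) q₁ 0 + f x (q₁+1) 1 ≤ f x q₁ 1 + f (x+1) (q₁+1) 0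
  F3 : ∀ q₁, f 0 (q₁+1) 0 + f 0 (q₁+1) 1 ≤ f 0 q₁ 1 + f 0 (q₁+2) 0
  F4 : ∀ x q₁ l₂, f x (q₁+1) l₂ ≤ f (x+1) q₁ l₂
  F5 : ∀ x q₁, f x q₁ 1 + f (x+1) q₁ 0 ≤ f x q₁ 0 + f (x+1) q₁ 1
  F6 : ∀ x q₁, f x q₁ 1 + f x (q₁+1) 0 ≤ f x q₁ 0 + f x (q₁+1) 1
  F7 : ∀ x q₁ l₂, f x q₁ l₂ ≤ f (x+1) q₁ l₂
  F8 : ∀ x q₁ l₂, f x q₁ l₂ ≤ f x (q₁+1) l₂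
  F9 : ∀ x q₁, f x q₁ 0 ≤ f x q₁ 1

/-- The intermediate-value function `T` obtained from `J`:
`T(x,q₁,1) = J(x,q₁,1)`, `T(0,0,0) = J(0,0,0)`,
`T(x,q₁,0) = min{J(x,q₁,0), J(x−1,q₁,1)}` for `x ≥ 1`, and
`T(0,q₁,0) = min{J(0,q₁,0), J(0,q₁−1,1)}` for `q₁ ≥ 1`. -/
noncomputable def interT (J : ℕ → ℕ → Fin 2 → ℝ) : ℕ → ℕ → Fin 2 → ℝ :=
  fun x q₁ l₂ =>
    if l₂ = (1 : Fin 2) then J x q₁ 1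
    else
      match x, q₁ with
      | 0, 0 => J 0 0 0
      | x' + 1, q' => min (J (x' + 1) q' 0) (J x' q' 1)
      | 0, q' + 1 => min (J 0 (q' + 1) 0) (J 0 q' 1)

section interT

variable (J : ℕ → ℕ → Fin 2 → ℝ)

@[simp]
lemma interT_one (x q : ℕ) : interT J x q 1 = J x q 1 := by
  simp [interT]

@[simp]
lemma interT_zero_zero_zero : interT J 0 0 0 = J 0 0 0 := by
  simp [interT]

@[simp]
lemma interT_succ_zero (x q : ℕ) :
    interT J (x + 1) q 0 = min (J (x + 1) q 0) (J x q 1) := by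
  simp [interT]

@[simp]
lemma interT_zero_succ_zero (q : ℕ) :
    interT J 0 (q + 1) 0 = min (J 0 (q + 1) 0) (J 0 q 1) := by
  simp [interT]

lemma interT_zero_le (x q : ℕ) : interT J x q 0 ≤ J x q 0 := by
  match x, q with
  | 0, 0 => simp
  | x + 1, q => simp
  | 0, q + 1 => simp

end interT

namespace InClassF

variable {J : ℕ → ℕ → Fin 2 → ℝ} (hJ : InClassF J)
include hJ

lemma convex_one_left (x q : ℕ) : 2 * J (x + 1) q 1 ≤ J x q 1 + J (x + 2) q 1 := by
  linarith [hJ.F1 x q, hJ.F5 (x + 1) q]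

lemma convex_one_right_zero (q : ℕ) : 2 * J 0 (q + 1) 1 ≤ J 0 q 1 + J 0 (q + 2) 1 := by
  linarith [hJ.F3 q, hJ.F6 0 (q + 1)]

lemma supermodular_one (x q : ℕ) :
    J (x + 1) q 1 + J x (q + 1) 1 ≤ J x q 1 + J (x + 1) (q + 1) 1 := by
  linarith [hJ.F2 x q, hJ.F6 (x + 1) q]

lemma interT_zero_le_one (x q : ℕ) : interT J x q 0 ≤ J x q 1 :=
  (interT_zero_le J x q).trans (hJ.F9 x q)

lemma interT_nonneg (x q : ℕ) (l : Fin 2) : 0 ≤ interT J x q l := by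
  match l, x, q with
  | 0, 0, 0 => simpa using hJ.nonneg 0 0 0
  | 0, x + 1, q => simpa using ⟨hJ.nonneg (x + 1) q 0, hJ.nonneg x q 1⟩
  | 0, 0, q + 1 => simpa using ⟨hJ.nonneg 0 (q + 1) 0, hJ.nonneg 0 q 1⟩
  | 1, x, q => simpa using hJ.nonneg x q 1

lemma interT_F1 (x q : ℕ) :
    interT J (x + 1) q 0 + interT J (x + 1) q 1 ≤ interT J x q 1 + interT J (x + 2) q 0 := by
  simp only [interT_one, interT_succ_zero, ← min_add_add_left, le_min_iff]
  constructor <;> linarith [hJ.F1 x q, min_le_left (J (x + 1) q 0) (J x q 1),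
    min_le_right (J (x + 1) q 0) (J x q 1)]

lemma interT_F2 (x q : ℕ) :
    interT J (x + 1) q 0 + interT J x (q + 1) 1 ≤
      interT J x q 1 + interT J (x + 1) (q + 1) 0 := by
  simp only [interT_one, interT_succ_zero, ← min_add_add_left, le_min_iff]
  constructor <;> linarith [hJ.F2 x q, min_le_left (J (x + 1) q 0) (J x q 1),
    min_le_right (J (x + 1) q 0) (J x q 1)]

lemma interT_F3 (q : ℕ) :
    interT J 0 (q + 1) 0 + interT J 0 (q + 1) 1 ≤ interT J 0 q 1 + interT J 0 (q + 2) 0 := by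
  simp only [interT_one, interT_zero_succ_zero, ← min_add_add_left, le_min_iff]
  constructor <;> linarith [hJ.F3 q, min_le_left (J 0 (q + 1) 0) (J 0 q 1),
    min_le_right (J 0 (q + 1) 0) (J 0 q 1)]

lemma interT_F4 (x q : ℕ) (l : Fin 2) : interT J x (q + 1) l ≤ interT J (x + 1) q l := by
  match l with
  | 0 =>
    rw [interT_succ_zero, le_min_iff]
    refine ⟨(interT_zero_le J x (q + 1)).trans (hJ.F4 x q 0), ?_⟩
    match x with
    | 0 => simp
    | x + 1 => simpa using Or.inr (hJ.F4 x q 1)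
  | 1 => simpa using hJ.F4 x q 1

lemma interT_F5 (x q : ℕ) :
    interT J x q 1 + interT J (x + 1) q 0 ≤ interT J x q 0 + interT J (x + 1) q 1 := by
  simp only [interT_one, interT_succ_zero]
  have hlow := min_le_left (J (x + 1) q 0) (J x q 1)
  have hpred := min_le_right (J (x + 1) q 0) (J x q 1)
  match x, q with
  | 0, 0 =>
    rw [interT_zero_zero_zero]
    linarith [hJ.F5 0 0]
  | 0, q + 1 =>
    simp only [interT_zero_succ_zero, ← min_add_add_right, le_min_iff]
    constructor <;> linarith [hJ.F5 0 (q + 1), hJ.supermodular_one 0 q, hJ.F4 0 q 1]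
  | x + 1, q =>
    simp only [interT_succ_zero, ← min_add_add_right, le_min_iff]
    constructor <;> linarith [hJ.F5 (x + 1) q, hJ.convex_one_left x q]

lemma interT_F6 (x q : ℕ) :
    interT J x q 1 + interT J x (q + 1) 0 ≤ interT J x q 0 + interT J x (q + 1) 1 := by
  simp only [interT_one]
  match x, q with
  | 0, 0 =>
    simp only [interT_zero_zero_zero, interT_zero_succ_zero]
    linarith [hJ.F6 0 0, min_le_left (J 0 1 0) (J 0 0 1)]
  | 0, q + 1 =>
    simp only [interT_zero_succ_zero, ← min_add_add_right, le_min_iff]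
    constructor <;> linarith [hJ.F6 0 (q + 1), hJ.convex_one_right_zero q,
      min_le_left (J 0 (q + 2) 0) (J 0 (q + 1) 1), min_le_right (J 0 (q + 2) 0) (J 0 (q + 1) 1)]
  | x + 1, q =>
    simp only [interT_succ_zero, ← min_add_add_right, le_min_iff]
    constructor <;> linarith [hJ.F6 (x + 1) q, hJ.supermodular_one x q,
      min_le_left (J (x + 1) (q + 1) 0) (J x (q + 1) 1),
      min_le_right (J (x + 1) (q + 1) 0) (J x (q + 1) 1)]

lemma interT_F7 (x q : ℕ) (l : Fin 2) : interT J x q l ≤ interT J (x + 1) q l := by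
  match l with
  | 0 =>
    rw [interT_succ_zero, le_min_iff]
    exact ⟨(interT_zero_le J x q).trans (hJ.F7 x q 0), hJ.interT_zero_le_one x q⟩
  | 1 => simpa using hJ.F7 x q 1

lemma interT_F8 (x q : ℕ) (l : Fin 2) : interT J x q l ≤ interT J x (q + 1) l := by
  match l, x with
  | 0, 0 =>
    rw [interT_zero_succ_zero, le_min_iff]
    exact ⟨(interT_zero_le J 0 q).trans (hJ.F8 0 q 0), hJ.interT_zero_le_one 0 q⟩
  | 0, x + 1 =>
    rw [interT_succ_zero, interT_succ_zero, le_min_iff]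
    exact ⟨(min_le_left _ _).trans (hJ.F8 (x + 1) q 0), (min_le_right _ _).trans (hJ.F8 x q 1)⟩
  | 1, x => simpa using hJ.F8 x q 1

lemma interT_F9 (x q : ℕ) : interT J x q 0 ≤ interT J x q 1 := by
  simpa using hJ.interT_zero_le_one x q

end InClassF

theorem stmt_13 (J : ℕ → ℕ → Fin 2 → ℝ) (hJ : InClassF J) :
    InClassF (interT J) :=
  ⟨hJ.interT_nonneg, hJ.interT_F1, hJ.interT_F2, hJ.interT_F3, hJ.interT_F4, hJ.interT_F5,
    hJ.interT_F6, hJ.interT_F7, hJ.interT_F8, hJ.interT_F9⟩
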